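/- Let X and Y be metric spaces, I a nonempty well-ordered index set, and (f_i)_{i ∈ I} a family of multifunctions from X to Y such that: each f_i is pointwise compact (f_i x is compact for every x ∈ X); the family is decreasing, i.e. f_j tightens f_i whenever i < j; and the family is equicontinuous in the Henkin sense, i.e. there exist a function δ assigning to each ε > 0 a real δ(ε) > 0 and a choice function y with y(i,x) ∈ f_i x for every i ∈ I and x ∈ domف f_i, such that for every ε > 0, every i ∈ I, every x ∈ dom f_i and every x' ∈ dom f_i with dist x x' < δ(ε), there exists y' ∈ f_i x' with dist (y(i,x)) y' < ε. Define the multifunction f by f x = ⋂ {f_i x | i ∈ I, f_i x ≠ ∅} (and f x = ∅ if f_i x = ∅ for all i). Then f is pointwise compact, f is Henkin-continuous, and f tightens every f_i. -/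

import Mathlib

/-!
Fix an ultrafilter `𝒰` on the index set refining `atTop`. A net `j ↦ u j` with `u j ∈ f j x`
eventually is eventually inside each compact `f i x` (the family decreases), so it converges
along `𝒰` to a point of every `f i x`, i.e. of the intersection. The Henkin choice for the
intersection is the `𝒰`-limit of the choices `y j x`; for the modulus `δ (ε / 2)`, matching
points `y' j ∈ f j x'` with `dist (y j x) (y' j) < ε / 2` converge to a point of the
intersection at `x'`, within `ε / 2` of the limit at `x`.
-/

open Set Filter Topology

/-- `g` tightens `f`: `dom f ⊆ dom g` and `g x ⊆ f x` on `dom f`. -/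
def Tightens {X Y : Type*} (g f : X → Set Y) : Prop :=
  (∀ x, (f x).Nonempty → (g x).Nonempty) ∧ (∀ x, (f x).Nonempty → g x ⊆ f x)

/-- Henkin-continuity of a multifunction between metric spaces: a modulus `δ`
depending only on `ε` and a choice `y x ∈ f x` depending only on `x`. -/
def HenkinContinuous {X Y : Type*} [MetricSpace X] [MetricSpace Y] (f : X → Set Y) : Prop :=
  ∃ δ : ℝ → ℝ, ∃ y : X → Y,
    (∀ ε > (0:ℝ), δ ε > 0) ∧
    (∀ x, (f x).Nonempty → y x ∈ f x) ∧
    (∀ ε > (0:ℝ), ∀ x, (f x).Nonempty → ∀ x', (f x').Nonempty →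
      dist x x' < δ ε → ∃ y' ∈ f x', dist (y x) y' < ε)

def HenkinEquicontinuous {I X Y : Type*} [MetricSpace X] [MetricSpace Y]
    (f : I → X → Set Y) : Prop :=
  ∃ δ : ℝ → ℝ, ∃ y : I → X → Y,
    (∀ ε > (0:ℝ), δ ε > 0) ∧
    (∀ i x, (f i x).Nonempty → y i x ∈ f i x) ∧
    (∀ ε > (0:ℝ), ∀ i : I, ∀ x, (f i x).Nonempty → ∀ x', (f i x').Nonempty →
      dist x x' < δ ε → ∃ y' ∈ f i x', dist (y i x) y' < ε)

def domInter {I X Y : Type*} (f : I → X → Set Y) (x : X) : Set Y :=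
  {y | (∃ i, (f i x).Nonempty) ∧ ∀ i, (f i x).Nonempty → y ∈ f i x}

lemma tightens_refl {X Y : Type*} (f : X → Set Y) : Tightens f f :=
  ⟨fun _ => id, fun _ _ => subset_rfl⟩

namespace domInter

variable {I X Y : Type*} {f : I → X → Set Y} {x : X} {i : I}

lemma subset (hi : (f i x).Nonempty) : domInter f x ⊆ f i x :=
  fun _ hz => hz.2 i hi

lemma isCompact [TopologicalSpace Y] [T2Space Y] (hcpt : ∀ i x, IsCompact (f i x)) :
    IsCompact (domInter f x) := by
  by_cases hx : ∃ i, (f i x).Nonempty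
  · obtain ⟨i₀, hi₀⟩ := hx
    have hclosed : domInter f x = ⋂ i ∈ {i | (f i x).Nonempty}, f i x := by
      ext z
      simp only [domInter, mem_iInter]
      exact ⟨And.right, fun h => ⟨⟨i₀, hi₀⟩, h⟩⟩
    refine (hcpt i₀ x).of_isClosed_subset ?_ (subset hi₀)
    rw [hclosed]
    exact isClosed_biInter fun i _ => (hcpt i x).isClosed
  · convert isCompact_empty
    exact eq_empty_of_forall_notMem fun _ hz => hx hz.1

variable [Preorder I] (hf : ∀ i j, i ≤ j → Tightens (f j) (f i))
include hf

lemma eventually_nonempty (hi : (f i x).Nonempty) : ∀ᶠ j in atTop, (f j x).Nonempty :=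
  (eventually_ge_atTop i).mono fun j hij => (hf i j hij).1 x hi

lemma exists_tendsto_mem [TopologicalSpace Y] [T2Space Y] (hcpt : ∀ i x, IsCompact (f i x))
    {𝒰 : Ultrafilter I} (h𝒰 : (𝒰 : Filter I) ≤ atTop) {u : I → Y} (hu : ∀ᶠ j in (𝒰 : Filter I), u j ∈ f j x) :
    ∃ z ∈ domInter f x, Tendsto u (𝒰 : Filter I) (𝓝 z) := by
  have hu_mem : ∀ i, (f i x).Nonempty → ∀ᶠ j in (𝒰 : Filter I), u j ∈ f i x := fun i hi => by
    filter_upwards [hu, h𝒰 (eventually_ge_atTop i)] with j hj hij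
    exact (hf i j hij).2 x hi hj
  obtain ⟨j₀, hj₀⟩ := hu.exists
  obtain ⟨z, -, hz⟩ := (hcpt j₀ x).ultrafilter_le_nhds (𝒰.map u)
    (le_principal_iff.2 (hu_mem j₀ ⟨_, hj₀⟩))
  exact ⟨z, ⟨⟨j₀, _, hj₀⟩, fun i hi => (hcpt i x).isClosed.mem_of_tendsto hz (hu_mem i hi)⟩, hz⟩

variable [IsDirected I (· ≤ ·)] [Nonempty I]

lemma nonempty [TopologicalSpace Y] [T2Space Y] (hcpt : ∀ i x, IsCompact (f i x))
    (hi : (f i x).Nonempty) : (domInter f x).Nonempty := by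
  have hpick : ∀ j, ∃ w, (f j x).Nonempty → w ∈ f j x := fun j => by
    by_cases hj : (f j x).Nonempty
    exacts [⟨hj.some, fun _ => hj.some_mem⟩, ⟨hi.some, fun h => absurd h hj⟩]
  choose u hu using hpick
  have h𝒰 : (Ultrafilter.of (atTop : Filter I) : Filter I) ≤ atTop := Ultrafilter.of_le _
  obtain ⟨z, hz, -⟩ := exists_tendsto_mem hf hcpt h𝒰 (Eventually.mono (h𝒰 (eventually_nonempty hf hi)) hu)
  exact ⟨z, hz⟩

lemma tightens [TopologicalSpace Y] [T2Space Y] (hcpt : ∀ i x, IsCompact (f i x)) (i : I) :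
    Tightens (domInter f) (f i) :=
  ⟨fun _ hi => nonempty hf hcpt hi, fun _ hi => subset hi⟩

lemma henkinContinuous [MetricSpace X] [MetricSpace Y] (hcpt : ∀ i x, IsCompact (f i x))
    (hequi : HenkinEquicontinuous f) : HenkinContinuous (domInter f) := by
  obtain ⟨δ, y, hδ, hy, hcont⟩ := hequi
  set 𝒰 := Ultrafilter.of (atTop : Filter I)
  have h𝒰 : (𝒰 : Filter I) ≤ atTop := Ultrafilter.of_le _
  have hnonempty : ∀ x, (domInter f x).Nonempty → ∀ᶠ j in (𝒰 : Filter I), (f j x).Nonempty :=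
    fun x hx => h𝒰 (eventually_nonempty hf hx.some_mem.1.choose_spec)
  have hlim : ∀ x, ∃ z, (domInter f x).Nonempty →
      z ∈ domInter f x ∧ Tendsto (y · x) (𝒰 : Filter I) (𝓝 z) := fun x => by
    by_cases hx : (domInter f x).Nonempty
    · obtain ⟨z, hz, hzlim⟩ :=
        exists_tendsto_mem hf hcpt h𝒰 ((hnonempty x hx).mono fun j hj => hy j x hj)
      exact ⟨z, fun _ => ⟨hz, hzlim⟩⟩
    · exact ⟨y (Classical.arbitrary I) x, fun h => absurd h hx⟩
  choose yF hyF using hlim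
  refine ⟨fun ε => δ (ε / 2), yF, fun ε hε => hδ _ (half_pos hε), fun x hx => (hyF x hx).1, ?_⟩
  intro ε hε x hx x' hx' hxx'
  have hmatch : ∀ j, ∃ w, (f j x).Nonempty ∧ (f j x').Nonempty →
      w ∈ f j x' ∧ dist (y j x) w < ε / 2 := fun j => by
    by_cases hj : (f j x).Nonempty ∧ (f j x').Nonempty
    · obtain ⟨w, hw⟩ := hcont (ε / 2) (half_pos hε) j x hj.1 x' hj.2 hxx'
      exact ⟨w, fun _ => hw⟩
    · exact ⟨y j x, fun h => absurd h hj⟩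
  choose w hw using hmatch
  have hboth := (hnonempty x hx).and (hnonempty x' hx')
  obtain ⟨y', hy', hwlim⟩ := exists_tendsto_mem hf hcpt h𝒰 (hboth.mono fun j hj => (hw j hj).1)
  refine ⟨y', hy', lt_of_le_of_lt ?_ (half_lt_self hε)⟩
  exact le_of_tendsto ((hyF x hx).2.dist hwlim) (hboth.mono fun j hj => (hw j hj).2.le)

end domInter

theorem henkin_intersection_of_equicontinuous_family
    {X Y : Type*} [MetricSpace X] [MetricSpace Y]
    {I : Type*} [LinearOrder I] [Nonempty I]
    (f : I → X → Set Y)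
    (hcpt : ∀ i x, IsCompact (f i x))
    (hdec : ∀ i j : I, i < j → Tightens (f j) (f i))
    (hequi : ∃ δ : ℝ → ℝ, ∃ y : I → X → Y,
      (∀ ε > (0:ℝ), δ ε > 0) ∧
      (∀ i x, (f i x).Nonempty → y i x ∈ f i x) ∧
      (∀ ε > (0:ℝ), ∀ i : I, ∀ x, (f i x).Nonempty → ∀ x', (f i x').Nonempty →
        dist x x' < δ ε → ∃ y' ∈ f i x', dist (y i x) y' < ε))
    (F : X → Set Y)
    (hF : ∀ x, F x =
      {y | (∃ i, (f i x).Nonempty) ∧ ∀ i, (f i x).Nonempty → y ∈ f i x}) :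
    (∀ x, IsCompact (F x)) ∧ HenkinContinuous F ∧ ∀ i, Tightens F (f i) := by
  obtain rfl : F = domInter f := funext hF
  have hf : ∀ i j, i ≤ j → Tightens (f j) (f i) := fun i j hij => by
    obtain rfl | hlt := hij.eq_or_lt
    exacts [tightens_refl _, hdec i j hlt]
  exact ⟨fun _ => domInter.isCompact hcpt, domInter.henkinContinuous hf hcpt hequi,
    domInter.tightens hf hcpt⟩
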